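/- arXiv:2602.14692 — 2 statements merged into one kernel-verified Lean document; each statement's English description precedes it below -/
import Mathlib

section
/- Let T, T₁, T₂, R be μ-invariant Markov kernels on E and let K* : [0, ∞) → [0, ∞] satisfy K*(0) = 0 and that v ↦ K*(v)/v is nondecreasing on (0, ∞). (i) If T satisfies the K*-WPI, then for every f ∈ L²₀(μ) with 0 < ‖f‖_osc < ∞, K*(‖Rf‖²_μ/‖f‖²_osc) ≤ ℰ_μ(T, Rf)/‖f‖²_osc. (ii) If T₁ and T₂ satisfy the comparison K*-WPI, then for every such f, K*(ℰ_μ(T₁, Rf)/‖f‖²_osc) ≤ ℰ_μ(T₂, Rf)/‖f‖²_osc. -/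
/-!
A `μ`-invariant Markov operator `R` preserves means and contracts both the `L²(μ)` norm (Jensen)
and the oscillation: the product kernel `(x, x') ↦ κ x ⊗ κ x'` leaves `μ ⊗ μ` invariant, so the
bound `|f y - f y'| ≤ ‖f‖_osc` holds `κ x ⊗ κ x'`-a.e. for a.e. `(x, x')`, and integrating it
bounds `|R f x - R f x'|`. So the (comparison) WPI applies to the centred function `R f`,
normalised by `‖R f‖_osc ≤ ‖f‖_osc`; passing to the larger `‖f‖_osc` only helps because
`K*(v) / v` is nondecreasing. If the numerator vanishes, `K*(0) = 0` settles the claim; otherwise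
`‖R f‖_osc > 0`, since a centred function of zero oscillation vanishes.
-/

open MeasureTheory ENNReal

noncomputable section

variable {α : Type*} [MeasurableSpace α]

/-- The oscillation seminorm `‖f‖_osc = ess sup_μ f − ess inf_μ f`, realised (with values in
`[0,∞]`) as the essential supremum of `|f x − f y|` over `μ ⊗ μ`. -/
def oscNorm (μ : Measure α) (f : α → ℝ) : ℝ≥0∞ :=
  essSup (fun p : α × α => ENNReal.ofReal |f p.1 - f p.2|) (μ.prod μ)

/-- The Dirichlet form `ℰ_μ(T, f) = ⟨(I − T)f, f⟩_μ` of an operator `T` on `L²(μ)`. -/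
def dirichletForm (μ : Measure α) (T : Lp ℝ 2 μ →L[ℝ] Lp ℝ 2 μ) (f : Lp ℝ 2 μ) : ℝ :=
  @inner ℝ _ _ (f - T f) f

/-- `T` is the `L²(μ)` operator induced by a `μ`-invariant Markov kernel. -/
def IsMarkovOperator (μ : Measure α) (T : Lp ℝ 2 μ →L[ℝ] Lp ℝ 2 μ) : Prop :=
  ∃ K : α → Measure α, Measurable K ∧ (∀ x, IsProbabilityMeasure (K x)) ∧
    μ.bind K = μ ∧ ∀ f : Lp ℝ 2 μ, ∀ᵐ x ∂μ, T f x = ∫ y, f y ∂(K x)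

/-- `S` satisfies the `K*`-WPI. -/
def KstarWPI (μ : Measure α) (Ks : ℝ → ℝ≥0∞) (S : Lp ℝ 2 μ →L[ℝ] Lp ℝ 2 μ) : Prop :=
  ∀ f : Lp ℝ 2 μ, (∫ x, f x ∂μ) = 0 → 0 < oscNorm μ f → oscNorm μ f < ⊤ →
    Ks (‖f‖ ^ 2 / ((oscNorm μ f).toReal) ^ 2) ≤
      ENNReal.ofReal (dirichletForm μ S f / ((oscNorm μ f).toReal) ^ 2)

/-- `S₁` and `S₂` satisfy the comparison `K*`-WPI. -/
def KstarCompWPI (μ : Measure α) (Ks : ℝ → ℝ≥0∞)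
    (S₁ S₂ : Lp ℝ 2 μ →L[ℝ] Lp ℝ 2 μ) : Prop :=
  ∀ f : Lp ℝ 2 μ, (∫ x, f x ∂μ) = 0 → 0 < oscNorm μ f → oscNorm μ f < ⊤ →
    Ks (dirichletForm μ S₁ f / ((oscNorm μ f).toReal) ^ 2) ≤
      ENNReal.ofReal (dirichletForm μ S₂ f / ((oscNorm μ f).toReal) ^ 2)

open ProbabilityTheory

lemma IsMarkovOperator.exists_kernel {μ : Measure α} {T : Lp ℝ 2 μ →L[ℝ] Lp ℝ 2 μ}
    (hT : IsMarkovOperator μ T) :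
    ∃ κ : Kernel α α, IsMarkovKernel κ ∧ κ ∘ₘ μ = μ ∧
      ∀ f : Lp ℝ 2 μ, ∀ᵐ x ∂μ, T f x = ∫ y, f y ∂κ x := by
  obtain ⟨K, hK, hKP, hbind, hrep⟩ := hT
  exact ⟨⟨K, hK⟩, ⟨hKP⟩, hbind, hrep⟩

section InvariantKernel

variable {μ : Measure α} {κ : Kernel α α}

lemma integral_integral_kernel_eq (hκ : κ ∘ₘ μ = μ) {f : α → ℝ} (hf : Integrable f μ) :
    ∫ x, ∫ y, f y ∂κ x ∂μ = ∫ x, f x ∂μ := by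
  rw [← hκ] at hf
  conv_rhs => rw [← hκ]
  rw [Measure.comp_eq_comp_const_apply] at hf ⊢
  rw [Kernel.integral_comp hf, Kernel.const_apply]

lemma parallelComp_self_comp_prod [SFinite μ] [IsSFiniteKernel κ] (hκ : κ ∘ₘ μ = μ) :
    (κ ∥ₖ κ) ∘ₘ μ.prod μ = μ.prod μ := by
  rw [← Kernel.id_parallelComp_comp_parallelComp_id, ← Measure.comp_assoc,
    ← Measure.prod_comp_left, hκ, ← Measure.prod_comp_right, hκ]

lemma eLpNorm_le_of_ae_eq_integral_kernel [IsMarkovKernel κ] (hκ : κ ∘ₘ μ = μ) {p : ℝ≥0∞}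
    (hp1 : 1 ≤ p) (hp : p ≠ ⊤) {f g : α → ℝ} (hf : StronglyMeasurable f)
    (hg : ∀ᵐ x ∂μ, g x = ∫ y, f y ∂κ x) : eLpNorm g p μ ≤ eLpNorm f p μ := by
  have hp0 : p ≠ 0 := (zero_lt_one.trans_le hp1).ne'
  have hr : 0 < p.toReal := ENNReal.toReal_pos hp0 hp
  have jensen (x : α) : ‖∫ y, f y ∂κ x‖ₑ ≤ eLpNorm f p (κ x) :=
    (enorm_integral_le_lintegral_enorm _).trans <| by
      rw [← eLpNorm_one_eq_lintegral_enorm]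
      exact eLpNorm_le_eLpNorm_of_exponent_le hp1 hf.aestronglyMeasurable
  rw [eLpNorm_eq_eLpNorm' hp0 hp, eLpNorm_eq_eLpNorm' hp0 hp]
  refine (ENNReal.rpow_le_rpow_iff hr).mp ?_
  rw [← lintegral_rpow_enorm_eq_rpow_eLpNorm' hr, ← lintegral_rpow_enorm_eq_rpow_eLpNorm' hr]
  calc ∫⁻ x, ‖g x‖ₑ ^ p.toReal ∂μ = ∫⁻ x, ‖∫ y, f y ∂κ x‖ₑ ^ p.toReal ∂μ :=
        lintegral_congr_ae (hg.mono fun x hx => by simp only [hx])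
    _ ≤ ∫⁻ x, eLpNorm f p (κ x) ^ p.toReal ∂μ :=
        lintegral_mono fun x => ENNReal.rpow_le_rpow (jensen x) hr.le
    _ = ∫⁻ x, ∫⁻ y, ‖f y‖ₑ ^ p.toReal ∂κ x ∂μ := by
        simp_rw [eLpNorm_eq_eLpNorm' hp0 hp, ← lintegral_rpow_enorm_eq_rpow_eLpNorm' hr]
    _ = ∫⁻ y, ‖f y‖ₑ ^ p.toReal ∂μ := by
        rw [← Measure.lintegral_bind κ.aemeasurable
          (hf.measurable.enorm.pow_const _).aemeasurable]
        exact congrArg (fun ν => ∫⁻ y, ‖f y‖ₑ ^ p.toReal ∂ν) hκ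

end InvariantKernel

section Oscillation

variable {μ : Measure α}

lemma ae_abs_sub_le_oscNorm {f : α → ℝ} (hf : oscNorm μ f ≠ ⊤) :
    ∀ᵐ p ∂μ.prod μ, |f p.1 - f p.2| ≤ (oscNorm μ f).toReal := by
  filter_upwards [ae_le_essSup (fun p : α × α => ENNReal.ofReal |f p.1 - f p.2|)] with p hp
  exact (ENNReal.ofReal_le_iff_le_toReal hf).mp hp

lemma oscNorm_le_ofReal {f : α → ℝ} {M : ℝ} (hM : ∀ᵐ p ∂μ.prod μ, |f p.1 - f p.2| ≤ M) :
    oscNorm μ f ≤ ENNReal.ofReal M :=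
  essSup_le_of_ae_le _ (hM.mono fun _ hp => ENNReal.ofReal_le_ofReal hp)

lemma abs_integral_sub_integral_le {ν₁ ν₂ : Measure α} [IsProbabilityMeasure ν₁]
    [IsProbabilityMeasure ν₂] {f : α → ℝ} (hf₁ : Integrable f ν₁) (hf₂ : Integrable f ν₂)
    {M : ℝ} (hM : ∀ᵐ q ∂ν₁.prod ν₂, |f q.1 - f q.2| ≤ M) :
    |∫ y, f y ∂ν₁ - ∫ y, f y ∂ν₂| ≤ M := by
  have hdiff : ∫ y, f y ∂ν₁ - ∫ y, f y ∂ν₂ = ∫ q, (f q.1 - f q.2) ∂ν₁.prod ν₂ := by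
    rw [integral_sub (hf₁.comp_fst ν₂) (hf₂.comp_snd ν₁), integral_fun_fst, integral_fun_snd]
    simp
  have hbound := norm_integral_le_of_norm_le_const (f := fun q : α × α => f q.1 - f q.2)
    (by simpa only [Real.norm_eq_abs] using hM)
  rw [probReal_univ, mul_one, Real.norm_eq_abs, ← hdiff] at hbound
  exact hbound

lemma oscNorm_le_of_ae_eq_integral_kernel [SFinite μ] {κ : Kernel α α} [IsMarkovKernel κ]
    (hκ : κ ∘ₘ μ = μ) {f g : α → ℝ} (hf : ∀ᵐ x ∂μ, Integrable f (κ x))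
    (hg : ∀ᵐ x ∂μ, g x = ∫ y, f y ∂κ x) : oscNorm μ g ≤ oscNorm μ f := by
  by_cases htop : oscNorm μ f = ⊤
  · exact htop ▸ le_top
  rw [← ENNReal.ofReal_toReal htop]
  apply oscNorm_le_ofReal
  have hbound : ∀ᵐ p ∂μ.prod μ, ∀ᵐ q ∂(κ p.1).prod (κ p.2),
      |f q.1 - f q.2| ≤ (oscNorm μ f).toReal := by
    have h := ae_abs_sub_le_oscNorm htop
    rw [← parallelComp_self_comp_prod hκ] at h
    simpa only [Kernel.parallelComp_apply] using Measure.ae_ae_of_ae_comp h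
  have hgood := hg.and hf
  filter_upwards [Measure.quasiMeasurePreserving_fst.ae hgood,
    Measure.quasiMeasurePreserving_snd.ae hgood, hbound] with p h₁ h₂ hp
  rw [h₁.1, h₂.1]
  exact abs_integral_sub_integral_le h₁.2 h₂.2 hp

lemma eq_zero_of_oscNorm_eq_zero [IsProbabilityMeasure μ] {f : Lp ℝ 2 μ}
    (hosc : oscNorm μ f = 0) (hmean : ∫ x, f x ∂μ = 0) : f = 0 := by
  have hpair : ∀ᵐ p ∂μ.prod μ, f p.1 = f p.2 := by
    filter_upwards [ae_abs_sub_le_oscNorm (hosc ▸ ENNReal.zero_ne_top)] with p hp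
    rw [hosc, ENNReal.toReal_zero] at hp
    exact sub_eq_zero.mp (abs_nonpos_iff.mp hp)
  obtain ⟨x₀, hx₀⟩ := (Measure.ae_ae_of_ae_prod hpair).exists
  have hconst : (f : α → ℝ) =ᵐ[μ] fun _ => f x₀ := hx₀.mono fun _ hy => hy.symm
  have hx₀_zero : f x₀ = 0 := by simpa [integral_congr_ae hconst] using hmean
  refine Lp.eq_zero_iff_ae_eq_zero.mpr (hconst.trans ?_)
  rw [hx₀_zero]
  rfl

end Oscillation

namespace IsMarkovOperator

variable {μ : Measure α} {T : Lp ℝ 2 μ →L[ℝ] Lp ℝ 2 μ}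

lemma integral_apply [IsFiniteMeasure μ] (hT : IsMarkovOperator μ T) (f : Lp ℝ 2 μ) :
    ∫ x, T f x ∂μ = ∫ x, f x ∂μ := by
  obtain ⟨κ, -, hκ, hrep⟩ := hT.exists_kernel
  rw [integral_congr_ae (hrep f),
    integral_integral_kernel_eq hκ ((Lp.memLp f).integrable one_le_two)]

lemma norm_apply_le (hT : IsMarkovOperator μ T) (f : Lp ℝ 2 μ) : ‖T f‖ ≤ ‖f‖ := by
  obtain ⟨κ, _, hκ, hrep⟩ := hT.exists_kernel
  rw [Lp.norm_def, Lp.norm_def]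
  exact ENNReal.toReal_mono (Lp.eLpNorm_ne_top f) <|
    eLpNorm_le_of_ae_eq_integral_kernel hκ one_le_two ENNReal.ofNat_ne_top
      (Lp.stronglyMeasurable f) (hrep f)

lemma oscNorm_apply_le [IsFiniteMeasure μ] (hT : IsMarkovOperator μ T) (f : Lp ℝ 2 μ) :
    oscNorm μ (T f) ≤ oscNorm μ f := by
  obtain ⟨κ, _, hκ, hrep⟩ := hT.exists_kernel
  have hf : Integrable (f : α → ℝ) (κ ∘ₘ μ) := by
    rw [hκ]
    exact (Lp.memLp f).integrable one_le_two
  exact oscNorm_le_of_ae_eq_integral_kernel hκ (Measure.ae_integrable_of_integrable_comp hf)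
    (hrep f)

lemma dirichletForm_nonneg (hT : IsMarkovOperator μ T) (f : Lp ℝ 2 μ) :
    0 ≤ dirichletForm μ T f := by
  rw [dirichletForm, inner_sub_left, real_inner_self_eq_norm_sq, sq, sub_nonneg]
  calc inner ℝ (T f) f ≤ ‖T f‖ * ‖f‖ := real_inner_le_norm _ _
    _ ≤ ‖f‖ * ‖f‖ := by gcongr; exact hT.norm_apply_le f

end IsMarkovOperator

lemma apply_div_sq_le_ofReal_div_sq_of_le (Ks : ℝ → ℝ≥0∞)
    (hKs : ∀ v w : ℝ, 0 < v → v ≤ w → Ks v / ENNReal.ofReal v ≤ Ks w / ENNReal.ofReal w)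
    {n e a b : ℝ} (hn : 0 < n) (ha : 0 < a) (hab : a ≤ b)
    (h : Ks (n / a ^ 2) ≤ ENNReal.ofReal (e / a ^ 2)) :
    Ks (n / b ^ 2) ≤ ENNReal.ofReal (e / b ^ 2) := by
  have hv : 0 < n / b ^ 2 := by have := ha.trans_le hab; positivity
  have hw : 0 < n / a ^ 2 := by positivity
  have hvw : n / b ^ 2 ≤ n / a ^ 2 := by gcongr
  calc Ks (n / b ^ 2)
      = Ks (n / b ^ 2) / ENNReal.ofReal (n / b ^ 2) * ENNReal.ofReal (n / b ^ 2) :=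
        (ENNReal.div_mul_cancel (by simpa using hv) ENNReal.ofReal_ne_top).symm
    _ ≤ Ks (n / a ^ 2) / ENNReal.ofReal (n / a ^ 2) * ENNReal.ofReal (n / b ^ 2) :=
        mul_le_mul_left (hKs _ _ hv hvw) _
    _ ≤ ENNReal.ofReal (e / a ^ 2) / ENNReal.ofReal (n / a ^ 2) * ENNReal.ofReal (n / b ^ 2) := by
        gcongr
    _ = ENNReal.ofReal (e / b ^ 2) := by
        rw [← ENNReal.ofReal_div_of_pos hw, ← ENNReal.ofReal_mul' hv.le]
        congr 1
        field_simp

theorem IsMarkovOperator.wpi_apply_of_wpi {μ : Measure α} [IsProbabilityMeasure μ]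
    {R : Lp ℝ 2 μ →L[ℝ] Lp ℝ 2 μ} (hR : IsMarkovOperator μ R) {Ks : ℝ → ℝ≥0∞} (hKs0 : Ks 0 = 0)
    (hKs : ∀ v w : ℝ, 0 < v → v ≤ w → Ks v / ENNReal.ofReal v ≤ Ks w / ENNReal.ofReal w)
    {N E : Lp ℝ 2 μ → ℝ} (hN0 : N 0 = 0)
    (hwpi : ∀ g : Lp ℝ 2 μ, ∫ x, g x ∂μ = 0 → 0 < oscNorm μ g → oscNorm μ g < ⊤ →
      Ks (N g / (oscNorm μ g).toReal ^ 2) ≤ ENNReal.ofReal (E g / (oscNorm μ g).toReal ^ 2))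
    {f : Lp ℝ 2 μ} (hf : ∫ x, f x ∂μ = 0) (hosc : oscNorm μ f < ⊤) (hNRf : 0 ≤ N (R f)) :
    Ks (N (R f) / (oscNorm μ f).toReal ^ 2) ≤
      ENNReal.ofReal (E (R f) / (oscNorm μ f).toReal ^ 2) := by
  obtain hzero | hpos := hNRf.eq_or_lt
  · rw [← hzero, zero_div, hKs0]
    exact zero_le
  have hmean : ∫ x, R f x ∂μ = 0 := (hR.integral_apply f).trans hf
  have hoscR : oscNorm μ (R f) ≤ oscNorm μ f := hR.oscNorm_apply_le f
  have hoscR_pos : 0 < oscNorm μ (R f) := by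
    refine pos_iff_ne_zero.mpr fun h0 => hpos.ne' ?_
    rw [eq_zero_of_oscNorm_eq_zero h0 hmean, hN0]
  have hoscR_lt : oscNorm μ (R f) < ⊤ := hoscR.trans_lt hosc
  exact apply_div_sq_le_ofReal_div_sq_of_le Ks hKs hpos
    (ENNReal.toReal_pos hoscR_pos.ne' hoscR_lt.ne) (ENNReal.toReal_mono hosc.ne hoscR)
    (hwpi _ hmean hoscR_pos hoscR_lt)

theorem stmt1_general
    (μ : Measure α) [IsProbabilityMeasure μ]
    (T T₁ T₂ R : Lp ℝ 2 μ →L[ℝ] Lp ℝ 2 μ)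
    (hT₁ : IsMarkovOperator μ T₁)
    (hR : IsMarkovOperator μ R)
    (Ks : ℝ → ℝ≥0∞) (hKs0 : Ks 0 = 0)
    (hKsmono : ∀ v w : ℝ, 0 < v → v ≤ w → Ks v / ENNReal.ofReal v ≤ Ks w / ENNReal.ofReal w) :
    (KstarWPI μ Ks T →
      ∀ f : Lp ℝ 2 μ, (∫ x, f x ∂μ) = 0 → 0 < oscNorm μ f → oscNorm μ f < ⊤ →
        Ks (‖R f‖ ^ 2 / ((oscNorm μ f).toReal) ^ 2) ≤
          ENNReal.ofReal (dirichletForm μ T (R f) / ((oscNorm μ f).toReal) ^ 2)) ∧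
    (KstarCompWPI μ Ks T₁ T₂ →
      ∀ f : Lp ℝ 2 μ, (∫ x, f x ∂μ) = 0 → 0 < oscNorm μ f → oscNorm μ f < ⊤ →
        Ks (dirichletForm μ T₁ (R f) / ((oscNorm μ f).toReal) ^ 2) ≤
          ENNReal.ofReal (dirichletForm μ T₂ (R f) / ((oscNorm μ f).toReal) ^ 2)) := by
  refine ⟨fun hWPI f hf _ hosc => ?_, fun hComp f hf _ hosc => ?_⟩
  · exact hR.wpi_apply_of_wpi hKs0 hKsmono (N := fun g => ‖g‖ ^ 2) (by simp) hWPI hf hosc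
      (sq_nonneg _)
  · exact hR.wpi_apply_of_wpi hKs0 hKsmono (by simp [dirichletForm]) hComp hf hosc
      (hT₁.dirichletForm_nonneg _)

theorem stmt1
    (μ : Measure α) [IsProbabilityMeasure μ]
    (T T₁ T₂ R : Lp ℝ 2 μ →L[ℝ] Lp ℝ 2 μ)
    (hT : IsMarkovOperator μ T) (hT₁ : IsMarkovOperator μ T₁)
    (hT₂ : IsMarkovOperator μ T₂) (hR : IsMarkovOperator μ R)
    (Ks : ℝ → ℝ≥0∞) (hKs0 : Ks 0 = 0)
    (hKsmono : ∀ v w : ℝ, 0 < v → v ≤ w → Ks v / ENNReal.ofReal v ≤ Ks w / ENNReal.ofReal w) :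
    (KstarWPI μ Ks T →
      ∀ f : Lp ℝ 2 μ, (∫ x, f x ∂μ) = 0 → 0 < oscNorm μ f → oscNorm μ f < ⊤ →
        Ks (‖R f‖ ^ 2 / ((oscNorm μ f).toReal) ^ 2) ≤
          ENNReal.ofReal (dirichletForm μ T (R f) / ((oscNorm μ f).toReal) ^ 2)) ∧
    (KstarCompWPI μ Ks T₁ T₂ →
      ∀ f : Lp ℝ 2 μ, (∫ x, f x ∂μ) = 0 → 0 < oscNorm μ f → oscNorm μ f < ⊤ →
        Ks (dirichletForm μ T₁ (R f) / ((oscNorm μ f).toReal) ^ 2) ≤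
          ENNReal.ofReal (dirichletForm μ T₂ (R f) / ((oscNorm μ f).toReal) ^ 2)) :=
  stmt1_general μ T T₁ T₂ R hT₁ hR Ks hKs0 hKsmono

end
end

section
/- Let a, c > 0 and b ∈ ℝ, and define β(s) = c·exp(−(a·log s + b)²) for s ≥ exp(−b/a) and β(s) = c for 0 ≤ s < exp(−b/a). Then for every δ > 1 there exist C > 0 and v₀ ∈ (0, 1) such that K*(v) ≥ C·v·exp((−√(−δ·log v) + b)/a) for all v ∈ (0, v₀]. Moreover, for every δ > 1 there exists C̃ > 0 such that for all integers n ≥ 1, F⁻¹(n) ≤ C̃·exp(−(a²/δ)·log²(n)). -/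
/-!
With `u = exp ((b - √(log (2c/v))) / a)` one has `β (1/u) = v/2`, hence `K*(v) ≥ u v / 2`; for small
`v`, `log (2c/v) ≤ -δ log v`, which gives the lower bound on `K*`.

For the upper bound on `F⁻¹`, fix `1 < δ' < δ`. Near `0` the lower bound (with `δ'`) gives
`1/K*(v) ≤ (2/v) exp ((√(-δ' log v) - b) / a)`, and away from `0` the monotone `K*` is bounded
below, so `F(e^{-t}) ≤ 2t exp ((√(δ' t) - b) / a) + E`. At `t = (a²/δ) log² n` the right-hand side is
`O(n^θ log² n)` with `θ = √(δ'/δ) < 1`, so it is at most `n` for large `n`; a constant `C̃ ≥ 1`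
takes care of the finitely many other `n`, because `F` vanishes on `[1/4, ∞)`.
-/

open MeasureTheory ENNReal

noncomputable section

/-- `K*(v) = sup_{u>0} (u·v − u·β(1/u))`, valued in `[0,∞]`
(the truncation at `0` is harmless since the supremum is nonnegative for `v ≥ 0`). -/
def Kstar (β : ℝ → ℝ) (v : ℝ) : ℝ≥0∞ :=
  ⨆ (u : ℝ) (_ : 0 < u), ENNReal.ofReal (u * v - u * β (1 / u))

def Ffun (β : ℝ → ℝ) (x : ℝ) : ℝ≥0∞ :=
  ∫⁻ v in Set.Ioc x (1 / 4 : ℝ), (Kstar β v)⁻¹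

open Filter Set Asymptotics

lemma setLIntegral_Ioc_inv_le_of_const_le {K : ℝ → ℝ≥0∞} {x y q : ℝ} (hq : 0 < q)
    (hK : ∀ v ∈ Ioc x y, ENNReal.ofReal q ≤ K v) :
    ∫⁻ v in Ioc x y, (K v)⁻¹ ≤ ENNReal.ofReal ((y - x) / q) :=
  calc ∫⁻ v in Ioc x y, (K v)⁻¹ ≤ ∫⁻ _ in Ioc x y, ENNReal.ofReal q⁻¹ := by
        refine setLIntegral_mono measurable_const fun v hv => ?_
        rw [ENNReal.ofReal_inv_of_pos hq]
        exact ENNReal.inv_le_inv' (hK v hv)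
    _ = ENNReal.ofReal ((y - x) / q) := by
        rw [setLIntegral_const, Real.volume_Ioc, ← ENNReal.ofReal_mul (inv_nonneg.2 hq.le),
          div_eq_inv_mul]

lemma setLIntegral_Ioc_inv_le_of_div_le {K : ℝ → ℝ≥0∞} {x y M : ℝ} (hx : 0 < x) (hxy : x ≤ y)
    (hM : 0 < M) (hK : ∀ v ∈ Ioc x y, ENNReal.ofReal (v / M) ≤ K v) :
    ∫⁻ v in Ioc x y, (K v)⁻¹ ≤ ENNReal.ofReal (M * Real.log (y / x)) := by
  have hpos : ∀ v ∈ Ioc x y, 0 < v := fun v hv => hx.trans hv.1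
  have hcont : ContinuousOn (fun v : ℝ => M / v) (uIcc x y) :=
    continuousOn_const.div continuousOn_id fun v hv =>
      (hx.trans_le (by rw [uIcc_of_le hxy] at hv; exact hv.1)).ne'
  calc ∫⁻ v in Ioc x y, (K v)⁻¹ ≤ ∫⁻ v in Ioc x y, ENNReal.ofReal (M / v) := by
        refine setLIntegral_mono (by fun_prop) fun v hv => ?_
        rw [← inv_div, ENNReal.ofReal_inv_of_pos (div_pos (hpos v hv) hM)]
        exact ENNReal.inv_le_inv' (hK v hv)
    _ = ENNReal.ofReal (∫ v in Ioc x y, M / v) := by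
        refine (ofReal_integral_eq_lintegral_ofReal ?_ ?_).symm
        · exact (intervalIntegrable_iff_integrableOn_Ioc_of_le hxy).1 hcont.intervalIntegrable
        · filter_upwards [ae_restrict_mem measurableSet_Ioc] with v hv
          exact div_nonneg hM.le (hpos v hv).le
    _ = ENNReal.ofReal (M * Real.log (y / x)) := by
        simp_rw [← intervalIntegral.integral_of_le hxy, div_eq_mul_one_div M,
          intervalIntegral.integral_const_mul,
          integral_one_div_of_pos hx (hx.trans_le hxy)]

lemma eventually_mul_rpow_mul_log_sq_add_le {θ : ℝ} (hθ : θ < 1) (K E : ℝ) :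
    ∀ᶠ x : ℝ in atTop, K * x ^ θ * Real.log x ^ 2 + E ≤ x := by
  have hlog : (fun x => Real.log x ^ 2) =o[atTop] fun x => x ^ (1 - θ) := by
    simpa using isLittleO_log_rpow_rpow_atTop 2 (sub_pos.2 hθ)
  have hmain : (fun x => K * x ^ θ * Real.log x ^ 2) =o[atTop] id := by
    refine (((isBigO_refl (fun x : ℝ => x ^ θ) atTop).mul_isLittleO hlog).const_mul_left K
      |>.congr' (by simp only [mul_assoc]; rfl) ?_)
    filter_upwards [eventually_gt_atTop 0] with x hx
    rw [id, ← Real.rpow_add hx, add_sub_cancel, Real.rpow_one]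
  filter_upwards [((hmain.add (isLittleO_const_id_atTop E)).bound one_pos),
    eventually_ge_atTop 0] with x hx hx0
  simpa [abs_of_nonneg hx0] using (le_abs_self _).trans hx

lemma exists_pos_forall_le_of_eventually {F : ℝ → ℝ≥0∞} (hF : Antitone F) (hF1 : F 1 = 0)
    {k : ℝ} (hk : 0 ≤ k) (h : ∀ᶠ n : ℕ in atTop, F (Real.exp (-k * Real.log n ^ 2)) ≤ n) :
    ∃ C : ℝ, 0 < C ∧ ∀ n : ℕ, 1 ≤ n → F (C * Real.exp (-k * Real.log n ^ 2)) ≤ n := by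
  obtain ⟨N, hN⟩ := eventually_atTop.1 h
  refine ⟨Real.exp (k * Real.log N ^ 2), Real.exp_pos _, fun n hn => ?_⟩
  rcases le_or_gt N n with hNn | hnN
  · refine le_trans (hF ?_) (hN n hNn)
    exact le_mul_of_one_le_left (Real.exp_pos _).le (Real.one_le_exp (by positivity))
  · have hn1 : (1 : ℝ) ≤ n := by exact_mod_cast hn
    have hlog : Real.log n ^ 2 ≤ Real.log N ^ 2 :=
      pow_le_pow_left₀ (Real.log_nonneg hn1)
        (Real.log_le_log (by positivity) (by exact_mod_cast hnN.le)) 2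
    have hle : 1 ≤ Real.exp (k * Real.log N ^ 2) * Real.exp (-k * Real.log n ^ 2) := by
      rw [← Real.exp_add]
      exact Real.one_le_exp (by nlinarith)
    exact (hF hle).trans (hF1.le.trans zero_le)

lemma ofReal_le_Kstar (β : ℝ → ℝ) (v : ℝ) {u : ℝ} (hu : 0 < u) :
    ENNReal.ofReal (u * v - u * β (1 / u)) ≤ Kstar β v :=
  le_iSup₂_of_le u hu le_rfl

lemma Kstar_mono (β : ℝ → ℝ) : Monotone (Kstar β) := fun _ _ hvw =>
  iSup₂_mono fun _ hu => ENNReal.ofReal_le_ofReal (by nlinarith)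

lemma Ffun_antitone (β : ℝ → ℝ) : Antitone (Ffun β) := fun _ _ hxy =>
  lintegral_mono_set (Ioc_subset_Ioc_left hxy)

lemma Ffun_one (β : ℝ → ℝ) : Ffun β 1 = 0 := by
  rw [Ffun, Ioc_eq_empty (by norm_num), Measure.restrict_empty, lintegral_zero_measure]

lemma Ffun_le_of_le_Kstar {β : ℝ → ℝ} {x y M q : ℝ} (hx : 0 < x) (hxy : x ≤ y) (hy : y ≤ 1 / 4)
    (hM : 0 < M) (hq : 0 < q) (hnear : ∀ v ∈ Ioc x y, ENNReal.ofReal (v / M) ≤ Kstar β v)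
    (hfar : ENNReal.ofReal q ≤ Kstar β y) :
    Ffun β x ≤ ENNReal.ofReal (M * Real.log (y / x) + (1 / 4 - y) / q) :=
  calc Ffun β x
      ≤ (∫⁻ v in Ioc x y, (Kstar β v)⁻¹) + ∫⁻ v in Ioc y (1 / 4), (Kstar β v)⁻¹ := by
        rw [Ffun, ← Ioc_union_Ioc_eq_Ioc hxy hy]
        exact lintegral_union_le _ _ _
    _ ≤ ENNReal.ofReal (M * Real.log (y / x)) + ENNReal.ofReal ((1 / 4 - y) / q) :=
        add_le_add (setLIntegral_Ioc_inv_le_of_div_le hx hxy hM hnear)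
          (setLIntegral_Ioc_inv_le_of_const_le hq fun _ hv => hfar.trans (Kstar_mono β hv.1.le))
    _ = ENNReal.ofReal (M * Real.log (y / x) + (1 / 4 - y) / q) :=
        (ENNReal.ofReal_add (mul_nonneg hM.le (Real.log_nonneg ((one_le_div hx).2 hxy)))
          (div_nonneg (by linarith) hq.le)).symm

section Profile

variable {a b c : ℝ} {β : ℝ → ℝ}

lemma profile_one_div_exp_eq (ha : 0 < a)
    (hβ : ∀ s : ℝ, 0 ≤ s →
      β s = if s < Real.exp (-b / a) then c else c * Real.exp (-(a * Real.log s + b) ^ 2))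
    {v : ℝ} (hv : 0 < v) (hv2c : v ≤ 2 * c) :
    β (1 / Real.exp ((b - √(Real.log (2 * c / v))) / a)) = v / 2 := by
  have hc : 0 < c := by linarith
  have hL : 0 ≤ Real.log (2 * c / v) := Real.log_nonneg ((one_le_div hv).2 hv2c)
  have hinv : 1 / Real.exp ((b - √(Real.log (2 * c / v))) / a)
      = Real.exp ((√(Real.log (2 * c / v)) - b) / a) := by
    rw [one_div, ← Real.exp_neg, ← neg_div, neg_sub]
  have hge : ¬ Real.exp ((√(Real.log (2 * c / v)) - b) / a) < Real.exp (-b / a) := by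
    rw [not_lt, Real.exp_le_exp]
    gcongr
    linarith [Real.sqrt_nonneg (Real.log (2 * c / v))]
  have harg : a * ((√(Real.log (2 * c / v)) - b) / a) + b = √(Real.log (2 * c / v)) := by
    field_simp
    ring
  rw [hinv, hβ _ (Real.exp_pos _).le, if_neg hge, Real.log_exp, harg, Real.sq_sqrt hL,
    Real.exp_neg, Real.exp_log (by positivity)]
  field_simp

lemma half_mul_exp_le_Kstar (ha : 0 < a)
    (hβ : ∀ s : ℝ, 0 ≤ s →
      β s = if s < Real.exp (-b / a) then c else c * Real.exp (-(a * Real.log s + b) ^ 2))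
    {v : ℝ} (hv : 0 < v) (hv2c : v ≤ 2 * c) :
    ENNReal.ofReal (v / 2 * Real.exp ((b - √(Real.log (2 * c / v))) / a)) ≤ Kstar β v := by
  have h := ofReal_le_Kstar β v (Real.exp_pos ((b - √(Real.log (2 * c / v))) / a))
  rw [profile_one_div_exp_eq ha hβ hv hv2c] at h
  convert h using 2
  ring

lemma exists_half_mul_exp_le_Kstar (ha : 0 < a) (hc : 0 < c)
    (hβ : ∀ s : ℝ, 0 ≤ s →
      β s = if s < Real.exp (-b / a) then c else c * Real.exp (-(a * Real.log s + b) ^ 2))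
    {δ : ℝ} (hδ : 1 < δ) :
    ∃ v₀ : ℝ, 0 < v₀ ∧ v₀ < 1 ∧ ∀ v : ℝ, 0 < v → v ≤ v₀ →
      ENNReal.ofReal (1 / 2 * v * Real.exp ((-√(-(δ * Real.log v)) + b) / a)) ≤ Kstar β v := by
  refine ⟨min (min (1 / 2) (2 * c)) (Real.exp (-|Real.log (2 * c)| / (δ - 1))),
    by positivity, (min_le_left _ _).trans_lt ((min_le_left _ _).trans_lt (by norm_num)),
    fun v hv hvv₀ => ?_⟩
  have hv2c : v ≤ 2 * c := hvv₀.trans ((min_le_left _ _).trans (min_le_right _ _))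
  have hlogv : Real.log v * (δ - 1) ≤ -|Real.log (2 * c)| := by
    rw [← le_div_iff₀ (by linarith), Real.log_le_iff_le_exp hv]
    exact hvv₀.trans (min_le_right _ _)
  have hlog : Real.log (2 * c / v) ≤ -(δ * Real.log v) := by
    rw [Real.log_div (by positivity) hv.ne']
    linarith [le_abs_self (Real.log (2 * c))]
  refine le_trans (ENNReal.ofReal_le_ofReal ?_) (half_mul_exp_le_Kstar ha hβ hv hv2c)
  rw [mul_comm (1 / 2 : ℝ), ← div_eq_mul_one_div]
  gcongr
  linarith [Real.sqrt_le_sqrt hlog]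

lemma exists_Ffun_exp_neg_le (ha : 0 < a) (hc : 0 < c)
    (hβ : ∀ s : ℝ, 0 ≤ s →
      β s = if s < Real.exp (-b / a) then c else c * Real.exp (-(a * Real.log s + b) ^ 2))
    {δ : ℝ} (hδ : 1 < δ) :
    ∃ t₀ E : ℝ, ∀ t : ℝ, t₀ ≤ t →
      Ffun β (Real.exp (-t)) ≤ ENNReal.ofReal (2 * t * Real.exp ((√(δ * t) - b) / a) + E) := by
  obtain ⟨v₀, hv₀, -, hK⟩ := exists_half_mul_exp_le_Kstar ha hc hβ hδ
  set v₁ := min v₀ (1 / 4)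
  have hv₁ : 0 < v₁ := lt_min hv₀ (by norm_num)
  have hv₁4 : v₁ ≤ 1 / 4 := min_le_right _ _
  set q := 1 / 2 * v₁ * Real.exp ((-√(-(δ * Real.log v₁)) + b) / a)
  refine ⟨-Real.log v₁, (1 / 4 - v₁) / q, fun t ht => ?_⟩
  set x := Real.exp (-t)
  have hx : 0 < x := Real.exp_pos _
  have hxv₁ : x ≤ v₁ := by
    rw [← Real.exp_log hv₁]
    exact Real.exp_le_exp.2 (by linarith)
  set M := 2 * Real.exp ((√(δ * t) - b) / a) with hM_def
  have hM : 0 < M := by positivity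
  have hnear : ∀ v ∈ Ioc x v₁, ENNReal.ofReal (v / M) ≤ Kstar β v := fun v hv => by
    have hv0 : 0 < v := hx.trans hv.1
    have hlogv : -t ≤ Real.log v := by
      rw [← Real.log_exp (-t)]
      exact Real.log_le_log hx hv.1.le
    have hdiv : v / M = 1 / 2 * v * Real.exp ((-√(δ * t) + b) / a) := by
      rw [hM_def, show (-√(δ * t) + b) / a = -((√(δ * t) - b) / a) by ring, Real.exp_neg]
      field_simp
    refine le_trans (ENNReal.ofReal_le_ofReal ?_) (hK v hv0 (hv.2.trans (min_le_left _ _)))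
    rw [hdiv]
    gcongr
    nlinarith
  have hlog : Real.log (v₁ / x) ≤ t := by
    rw [Real.log_div hv₁.ne' hx.ne', Real.log_exp]
    linarith [Real.log_nonpos hv₁.le (by linarith)]
  refine (Ffun_le_of_le_Kstar hx hxv₁ hv₁4 hM (by positivity) hnear
    (hK v₁ hv₁ (min_le_left _ _))).trans (ENNReal.ofReal_le_ofReal (add_le_add_left ?_ _))
  calc M * Real.log (v₁ / x) ≤ M * t := mul_le_mul_of_nonneg_left hlog hM.le
    _ = 2 * t * Real.exp ((√(δ * t) - b) / a) := by ring

lemma eventually_Ffun_exp_neg_mul_log_sq_le (ha : 0 < a) (hc : 0 < c)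
    (hβ : ∀ s : ℝ, 0 ≤ s →
      β s = if s < Real.exp (-b / a) then c else c * Real.exp (-(a * Real.log s + b) ^ 2))
    {δ : ℝ} (hδ : 1 < δ) :
    ∀ᶠ n : ℕ in atTop, Ffun β (Real.exp (-(a ^ 2 / δ) * Real.log n ^ 2)) ≤ n := by
  obtain ⟨δ', hδ'1, hδ'δ⟩ := exists_between hδ
  set θ := √(δ' / δ)
  have hθ : θ < 1 := by
    rw [Real.sqrt_lt' one_pos, one_pow, div_lt_one (by linarith)]
    exact hδ'δ
  obtain ⟨t₀, E, hF⟩ := exists_Ffun_exp_neg_le ha hc hβ hδ'1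
  have hlog_sq : Tendsto (fun n : ℕ => a ^ 2 / δ * Real.log n ^ 2) atTop atTop :=
    ((tendsto_pow_atTop two_ne_zero).comp
      (Real.tendsto_log_atTop.comp tendsto_natCast_atTop_atTop)).const_mul_atTop (by positivity)
  filter_upwards [hlog_sq.eventually_ge_atTop t₀, tendsto_natCast_atTop_atTop.eventually
      (eventually_mul_rpow_mul_log_sq_add_le hθ (2 * (a ^ 2 / δ) * Real.exp (-b / a)) E),
    eventually_ge_atTop 1] with n ht₀ hn hn1
  have hn0 : (0 : ℝ) < n := by exact_mod_cast hn1
  have hlogn : 0 ≤ Real.log n := Real.log_nonneg (by exact_mod_cast hn1)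
  have hsqrt : √(δ' * (a ^ 2 / δ * Real.log n ^ 2)) = a * θ * Real.log n := by
    rw [← Real.sqrt_sq (by positivity : 0 ≤ a * θ * Real.log n), mul_pow, mul_pow,
      Real.sq_sqrt (by positivity)]
    ring_nf
  have hexp : Real.exp ((a * θ * Real.log n - b) / a) = n ^ θ * Real.exp (-b / a) := by
    rw [Real.rpow_def_of_pos hn0, ← Real.exp_add]
    congr 1
    field_simp
    ring
  calc Ffun β (Real.exp (-(a ^ 2 / δ) * Real.log n ^ 2))
      ≤ ENNReal.ofReal (2 * (a ^ 2 / δ * Real.log n ^ 2)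
          * Real.exp ((√(δ' * (a ^ 2 / δ * Real.log n ^ 2)) - b) / a) + E) := by
        rw [neg_mul]
        exact hF _ ht₀
    _ = ENNReal.ofReal (2 * (a ^ 2 / δ) * Real.exp (-b / a) * n ^ θ * Real.log n ^ 2 + E) := by
        rw [hsqrt, hexp]
        ring_nf
    _ ≤ n := by
        rw [← ENNReal.ofReal_natCast n]
        exact ENNReal.ofReal_le_ofReal hn

end Profile

/-- The bound `F⁻¹(n) ≤ C̃·exp(−(a²/δ)·log² n)` is stated as `F(C̃·exp(−(a²/δ)·log² n)) ≤ n`,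
which is equivalent since `F` is decreasing. -/
theorem stmt19
    (a c : ℝ) (ha : 0 < a) (hc : 0 < c) (b : ℝ)
    (β : ℝ → ℝ)
    (hβ : ∀ s : ℝ, 0 ≤ s →
      β s = if s < Real.exp (-b / a) then c else c * Real.exp (-(a * Real.log s + b) ^ 2)) :
    (∀ δ : ℝ, 1 < δ → ∃ C : ℝ, 0 < C ∧ ∃ v₀ : ℝ, 0 < v₀ ∧ v₀ < 1 ∧
      ∀ v : ℝ, 0 < v → v ≤ v₀ →
        ENNReal.ofReal (C * v * Real.exp ((-Real.sqrt (-(δ * Real.log v)) + b) / a)) ≤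
          Kstar β v) ∧
    (∀ δ : ℝ, 1 < δ → ∃ Ct : ℝ, 0 < Ct ∧
      ∀ n : ℕ, 1 ≤ n →
        Ffun β (Ct * Real.exp (-(a ^ 2 / δ) * (Real.log n) ^ 2)) ≤ (n : ℝ≥0∞)) :=
  ⟨fun _ hδ => ⟨1 / 2, one_half_pos, exists_half_mul_exp_le_Kstar ha hc hβ hδ⟩,
    fun _ hδ => exists_pos_forall_le_of_eventually (Ffun_antitone β) (Ffun_one β) (by positivity)
      (eventually_Ffun_exp_neg_mul_log_sq_le ha hc hβ hδ)⟩

end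
end
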